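/- Let R be a shortest closed or open walk in a positively edge-weighted connected multigraph G that starts at s, ends at t, and visits every vertex of a prescribed waypoint set W. Then R traverses each edge of G at most twice. -/

import Mathlib

/-!
If an edge `uv` were traversed three times, one of its two orientations, say `u → v`, would be
traversed twice, so `R = a · (u → v) · b · (u → v) · c` with `b` a walk from `v` back to `u`.
Then `a · b⁻¹ · c` is again an `s`–`t` walk through every vertex of `R`, and it is shorter by
`2 ω(uv) > 0`, contradicting the minimality of `R`.
-/

namespace SimpleGraph

variable {V : Type*} {G : SimpleGraph V}

theorem Dart.count_map_edge_le [DecidableEq V] (d : G.Dart) (l : List G.Dart) :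
    (l.map Dart.edge).count d.edge ≤ l.count d + l.count d.symm := by
  induction l with
  | nil => simp
  | cons x l ih =>
    by_cases hx : x.edge = d.edge
    · rcases (dart_edge_eq_iff x d).mp hx with rfl | rfl <;>
        simp only [List.map_cons, Dart.edge_symm, List.count_cons_self,
          List.count_cons_of_ne, Dart.symm_ne, (Dart.symm_ne _).symm, ne_eq, not_false_eq_true] <;>
        omega
    · have hxd : x ≠ d := by rintro rfl; exact hx rfl
      have hxd' : x ≠ d.symm := by rintro rfl; exact hx d.edge_symm
      simp only [List.map_cons, List.count_cons_of_ne hx, List.count_cons_of_ne hxd,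
        List.count_cons_of_ne hxd']
      omega

namespace Walk

theorem exists_eq_append_cons_of_mem_darts {s t u v : V} (p : G.Walk s t) (h : G.Adj u v)
    (hd : ⟨(u, v), h⟩ ∈ p.darts) :
    ∃ (p₁ : G.Walk s u) (p₂ : G.Walk v t), p = p₁.append (cons h p₂) := by
  induction p with
  | nil => simp at hd
  | cons h' q ih =>
    rcases List.mem_cons.mp hd with hd | hd
    · obtain ⟨rfl, rfl⟩ : u = _ ∧ v = _ := by simpa [Prod.ext_iff] using congrArg Dart.toProd hd
      exact ⟨nil, q, rfl⟩
    · obtain ⟨p₁, p₂, rfl⟩ := ih hd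
      exact ⟨cons h' p₁, p₂, rfl⟩

section Shortcut

variable {s t u v : V} (a : G.Walk s u) (b : G.Walk v u) (c : G.Walk v t) (h : G.Adj u v)

theorem support_subset_support_append_reverse_append :
    (a.append (cons h (b.append (cons h c)))).support ⊆ (a.append (b.reverse.append c)).support := by
  intro w hw
  have hu : u ∈ b.support := b.end_mem_support
  simp only [mem_support_append_iff, support_cons, List.mem_cons, support_reverse,
    List.mem_reverse] at hw ⊢
  rcases hw with hw | rfl | hw | rfl | hw <;> simp_all

theorem sum_map_edges_append_cons_append_cons (ω : Sym2 V → ℕ) :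
    ((a.append (cons h (b.append (cons h c)))).edges.map ω).sum
      = ((a.append (b.reverse.append c)).edges.map ω).sum + 2 * ω s(u, v) := by
  simp only [edges_append, edges_cons, edges_reverse, List.map_append, List.map_cons,
    List.map_reverse, List.sum_append, List.sum_cons, List.sum_reverse]
  ring

end Shortcut

variable [DecidableEq V]

theorem exists_eq_append_cons_append_cons_of_two_le_count_darts {s t u v : V}
    (p : G.Walk s t) (h : G.Adj u v) (hc : 2 ≤ p.darts.count ⟨(u, v), h⟩) :
    ∃ (a : G.Walk s u) (b : G.Walk v u) (c : G.Walk v t),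
      p = a.append (cons h (b.append (cons h c))) := by
  obtain ⟨p₁, p₂, rfl⟩ := p.exists_eq_append_cons_of_mem_darts h (List.count_pos_iff.mp (by omega))
  simp only [darts_append, darts_cons, List.count_append, List.count_cons_self] at hc
  rcases Nat.eq_zero_or_pos (p₂.darts.count ⟨(u, v), h⟩) with h₂ | h₂
  · obtain ⟨a, b, rfl⟩ := p₁.exists_eq_append_cons_of_mem_darts h (List.count_pos_iff.mp (by omega))
    exact ⟨a, b, p₂, by rw [← append_assoc, cons_append]⟩
  · obtain ⟨b, c, rfl⟩ := p₂.exists_eq_append_cons_of_mem_darts h (List.count_pos_iff.mp h₂)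
    exact ⟨p₁, b, c, rfl⟩

theorem exists_dart_two_le_count_darts_of_three_le_count_edges {s t : V} (p : G.Walk s t)
    {e : Sym2 V} (he : 3 ≤ p.edges.count e) :
    ∃ d : G.Dart, d.edge = e ∧ 2 ≤ p.darts.count d := by
  obtain ⟨d, -, rfl⟩ := List.mem_map.mp (List.count_pos_iff.mp (by omega : 0 < p.edges.count e))
  have := d.count_map_edge_le p.darts
  rw [← edges] at this
  by_cases hd : 2 ≤ p.darts.count d
  · exact ⟨d, rfl, hd⟩
  · exact ⟨d.symm, d.edge_symm, by omega⟩

end Walk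

end SimpleGraph

theorem stmt_0_general {V : Type*} [DecidableEq V] (G : SimpleGraph V)
    (ω : Sym2 V → ℕ) (hω : ∀ e ∈ G.edgeSet, 1 ≤ ω e)
    (s t : V) (W : Set V) (R : G.Walk s t)
    (hvisit : ∀ w ∈ W, w ∈ R.support)
    (hmin : ∀ q : G.Walk s t, (∀ w ∈ W, w ∈ q.support) →
      (R.edges.map ω).sum ≤ (q.edges.map ω).sum) :
    ∀ e : Sym2 V, R.edges.count e ≤ 2 := by
  intro e
  by_contra! he
  obtain ⟨⟨⟨u, v⟩, huv⟩, rfl, hd⟩ := R.exists_dart_two_le_count_darts_of_three_le_count_edges he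
  obtain ⟨a, b, c, rfl⟩ := R.exists_eq_append_cons_append_cons_of_two_le_count_darts huv hd
  have hshorter := hmin (a.append (b.reverse.append c)) fun w hw ↦
    SimpleGraph.Walk.support_subset_support_append_reverse_append a b c huv (hvisit w hw)
  rw [SimpleGraph.Walk.sum_map_edges_append_cons_append_cons] at hshorter
  dsimp only at hshorter
  have := hω s(u, v) (G.mem_edgeSet.mpr huv)
  omega

/-- A shortest walk from `s` to `t` visiting all waypoints in a positively
edge-weighted connected graph traverses each edge at most twice. -/
theorem stmt_0 {V : Type*} [Fintype V] [DecidableEq V] (G : SimpleGraph V)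
    (hconn : G.Connected) (ω : Sym2 V → ℕ) (hω : ∀ e ∈ G.edgeSet, 1 ≤ ω e)
    (s t : V) (W : Set V) (R : G.Walk s t)
    (hvisit : ∀ w ∈ W, w ∈ R.support)
    (hmin : ∀ q : G.Walk s t, (∀ w ∈ W, w ∈ q.support) →
      (R.edges.map ω).sum ≤ (q.edges.map ω).sum) :
    ∀ e : Sym2 V, R.edges.count e ≤ 2 :=
  stmt_0_general G ω hω s t W R hvisit hmin
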